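/- Let A be an n×n labeled transition matrix (whose entries do not contain τ), S a boolean n×n matrix of silent steps, ρ a boolean termination vector, V a surjective boolean n×N collector, R = VVᵀ, and Π_V = (S ⊓ R)*. Then the branching-bisimulation conditions VVᵀ(I + Π_V S)V = (I + Π_V S)V, VVᵀΠ_V A V = Π_V A V, and VVᵀΠ_V ρ = Π_V ρ hold if and only if RS ≤ R + Π_V S R, RA ≤ Π_V A R, and Rρ ≤ Π_V ρ. -/

import Mathlib

open Matrix

instance : CommSemiring Prop where
  add a b := a ∨ b
  add_assoc a b c := propext or_assoc
  zero := False
  zero_add a := false_or a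
  add_zero a := or_false a
  add_comm a b := propext or_comm
  nsmul n p := n ≠ 0 ∧ p
  nsmul_zero p := by show ((0:ℕ) ≠ 0 ∧ p) = False; simp
  nsmul_succ n p := by
    show ((n + 1 : ℕ) ≠ 0 ∧ p) = ((n ≠ 0 ∧ p) ∨ p)
    by_cases h : n = 0 <;> simp [h]
  mul a b := a ∧ b
  mul_assoc a b c := propext and_assoc
  one := True
  one_mul a := true_and a
  mul_one a := and_true a
  left_distrib a b c := propext and_or_left
  right_distrib a b c := propext or_and_right
  zero_mul a := false_and a
  mul_zero a := and_false a
  mul_comm a b := propext and_comm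

instance {α : Type*} : CommSemiring (Set α) where
  add a b := a ∪ b
  add_assoc := Set.union_assoc
  zero := (∅ : Set α)
  zero_add := Set.empty_union
  add_zero := Set.union_empty
  add_comm := Set.union_comm
  nsmul n s := {x ∈ s | n ≠ 0}
  nsmul_zero s := by show {x ∈ s | (0:ℕ) ≠ 0} = (∅ : Set α); simp
  nsmul_succ n s := by
    show {x ∈ s | (n + 1 : ℕ) ≠ 0} = {x ∈ s | n ≠ 0} ∪ s
    by_cases h : n = 0 <;> ext x <;> simp [h]
  mul a b := a ∩ b
  mul_assoc := Set.inter_assoc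
  one := (Set.univ : Set α)
  one_mul := Set.univ_inter
  mul_one := Set.inter_univ
  left_distrib := Set.inter_union_distrib_left
  right_distrib := Set.union_inter_distrib_right
  zero_mul := Set.empty_inter
  mul_zero := Set.inter_empty
  mul_comm := Set.inter_comm

/-- Embedding of boolean matrices into `Set 𝒜`-labeled matrices:
a `True` entry becomes the full action set, a `False` entry the empty set. -/
def emb (𝒜 : Type*) {m p : Type*} (M : Matrix m p Prop) : Matrix m p (Set 𝒜) :=
  Matrix.of fun i j => {_a : 𝒜 | M i j}

/-- Reflexive-transitive closure `S* = Σ_{k ≥ 0} S^k` of a boolean matrix. -/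
def mstar {n : ℕ} (S : Matrix (Fin n) (Fin n) Prop) : Matrix (Fin n) (Fin n) Prop :=
  Matrix.of fun i j => ∃ k : ℕ, (S ^ k) i j

/-- Elementwise product (meet) of boolean matrices. -/
def minf {n : ℕ} (A B : Matrix (Fin n) (Fin n) Prop) : Matrix (Fin n) (Fin n) Prop :=
  Matrix.of fun i j => A i j ∧ B i j

/-!
Both sides live in idempotent semirings: boolean matrices and matrices of action sets, ordered
entrywise. Because `V` is a collector, `R = VVᵀ` satisfies `1 ≤ R` and `VᵀV ≤ 1`; hence `R` is an
idempotent equivalence with `RV = V`, and `R Y V = Y V` holds exactly when `R Y ≤ Y R`. Moreover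
`1 ≤ Π_V ≤ R` gives `R Π_V = R`. With these two facts each branching-bisimulation equation
unfolds to the corresponding simulation inequality, and the action condition is transported to
action sets along the semiring embedding `emb`.
-/

-- Not instances, so that `+` and `*` on `Prop` and `Set α` keep elaborating through the instances
-- above.
noncomputable abbrev Prop.idemCommSemiring : IdemCommSemiring Prop :=
  { (inferInstance : CommSemiring Prop), (inferInstance : SemilatticeSup Prop),
    (inferInstance : OrderBot Prop) with add_eq_sup := fun _ _ => rfl }

noncomputable abbrev Set.idemCommSemiring {α : Type*} : IdemCommSemiring (Set α) :=
  { (inferInstance : CommSemiring (Set α)), (inferInstance : SemilatticeSup (Set α)),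
    (inferInstance : OrderBot (Set α)) with add_eq_sup := fun _ _ => rfl }

-- Mathlib's `Matrix.instPartialOrder` is the Loewner order; here matrices are ordered entrywise.
abbrev Matrix.entrywisePartialOrder {m n α : Type*} [PartialOrder α] :
    PartialOrder (Matrix m n α) :=
  inferInstanceAs (PartialOrder (m → n → α))

attribute [local instance] Matrix.entrywisePartialOrder

theorem Finset.sum_prop {ι : Type*} (s : Finset ι) (f : ι → Prop) :
    ∑ k ∈ s, f k = ∃ k ∈ s, f k := by
  induction s using Finset.cons_induction with
  | empty => exact propext ⟨False.elim, by simp⟩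
  | cons a s h ih =>
    rw [Finset.sum_cons, ih]
    show (f a ∨ _) = _
    simp

namespace Matrix

variable {l m n p α : Type*}

section IdemSemiring

variable [IdemSemiring α]

theorem mul_le_mul_of_le [Fintype m] {M M' : Matrix l m α} {N N' : Matrix m n α} (hM : M ≤ M')
    (hN : N ≤ N') : M * N ≤ M' * N' :=
  fun i j => Finset.sum_le_sum fun k _ => mul_le_mul' (hM i k) (hN k j)

theorem add_le_iff {M N P : Matrix m n α} : M + N ≤ P ↔ M ≤ P ∧ N ≤ P :=
  ⟨fun h => ⟨fun i j => (_root_.add_le_iff.1 (h i j)).1,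
      fun i j => (_root_.add_le_iff.1 (h i j)).2⟩,
    fun h i j => add_le (h.1 i j) (h.2 i j)⟩

variable [Fintype n]

theorem mul_mul_mul_le_of_mul_le_one [Fintype m] [DecidableEq m] {V : Matrix n m α}
    {W : Matrix m n α} (hWV : W * V ≤ 1) : V * W * (V * W) ≤ V * W :=
  calc V * W * (V * W) = V * (W * V) * W := by simp only [Matrix.mul_assoc]
    _ ≤ V * 1 * W := mul_le_mul_of_le (mul_le_mul_of_le le_rfl hWV) le_rfl
    _ = V * W := by rw [Matrix.mul_one]

variable [DecidableEq n]

theorem le_mul_of_one_le_left {R : Matrix n n α} (hR : 1 ≤ R) (Y : Matrix n p α) : Y ≤ R * Y := by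
  simpa using mul_le_mul_of_le hR le_rfl (N := Y)

theorem le_mul_of_one_le_right {R : Matrix n n α} (hR : 1 ≤ R) (Y : Matrix p n α) : Y ≤ Y * R := by
  simpa using mul_le_mul_of_le le_rfl hR (M := Y)

theorem pow_le_of_le {M R : Matrix n n α} (h1 : 1 ≤ R) (hRR : R * R ≤ R) (hM : M ≤ R) :
    ∀ k : ℕ, M ^ k ≤ R
  | 0 => by rwa [pow_zero]
  | k + 1 => by
    rw [pow_succ]
    exact (mul_le_mul_of_le (pow_le_of_le h1 hRR hM k) hM).trans hRR

theorem mul_mul_mul_eq_mul_iff [Fintype m] [DecidableEq m] {V : Matrix n m α} {W : Matrix m n α}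
    (hVW : 1 ≤ V * W) (hWV : W * V ≤ 1) (Y : Matrix n n α) :
    V * W * Y * V = Y * V ↔ V * W * Y ≤ Y * (V * W) := by
  refine ⟨fun h => ?_, fun h => le_antisymm ?_ ?_⟩
  · calc V * W * Y ≤ V * W * Y * (V * W) := le_mul_of_one_le_right hVW _
      _ = Y * (V * W) := by rw [← Matrix.mul_assoc, h, Matrix.mul_assoc]
  · calc V * W * Y * V ≤ Y * (V * W) * V := mul_le_mul_of_le h le_rfl
      _ = Y * V * (W * V) := by simp only [Matrix.mul_assoc]
      _ ≤ Y * V * 1 := mul_le_mul_of_le le_rfl hWV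
      _ = Y * V := Matrix.mul_one _
  · exact mul_le_mul_of_le (le_mul_of_one_le_left hVW Y) le_rfl

theorem mul_eq_left_of_one_le_of_le {R P : Matrix n n α} (hP : 1 ≤ P) (hPR : P ≤ R)
    (hRR : R * R ≤ R) : R * P = R :=
  le_antisymm ((mul_le_mul_of_le le_rfl hPR).trans hRR) (le_mul_of_one_le_right hP R)

end IdemSemiring

theorem mul_apply_prop [Fintype m] (X : Matrix l m Prop) (Y : Matrix m n Prop) (i : l) (j : n) :
    (X * Y) i j = ∃ k, X i k ∧ Y k j := by
  rw [mul_apply, Finset.sum_prop]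
  simp only [Finset.mem_univ, true_and]
  rfl

theorem one_apply_prop [DecidableEq n] (i j : n) : (1 : Matrix n n Prop) i j = (i = j) := by
  rw [one_apply]
  split_ifs with h
  · exact propext ⟨fun _ => h, fun _ => trivial⟩
  · exact propext ⟨False.elim, h⟩

theorem one_le_mul_transpose [Fintype m] [DecidableEq n] {V : Matrix n m Prop}
    (hV : ∀ i, ∃ j, V i j) : 1 ≤ V * Vᵀ := by
  intro i j hij
  rw [one_apply_prop] at hij
  subst hij
  obtain ⟨k, hk⟩ := hV i
  rw [mul_apply_prop]
  exact ⟨k, hk, hk⟩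

theorem transpose_mul_le_one [Fintype n] [DecidableEq m] {V : Matrix n m Prop}
    (hV : ∀ i, {j | V i j}.Subsingleton) : Vᵀ * V ≤ 1 := by
  intro a b hab
  rw [mul_apply_prop] at hab
  obtain ⟨i, ha, hb⟩ := hab
  rw [one_apply_prop]
  exact hV i ha hb

end Matrix

theorem one_le_mstar {n : ℕ} (M : Matrix (Fin n) (Fin n) Prop) : 1 ≤ mstar M :=
  fun _ _ h => ⟨0, by rwa [pow_zero]⟩

theorem mstar_le {n : ℕ} {M R : Matrix (Fin n) (Fin n) Prop} (h1 : 1 ≤ R) (hRR : R * R ≤ R)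
    (hM : M ≤ R) : mstar M ≤ R := by
  let := Prop.idemCommSemiring
  exact fun i j ⟨k, hk⟩ => Matrix.pow_le_of_le h1 hRR hM k i j hk

theorem minf_le_right {n : ℕ} (A B : Matrix (Fin n) (Fin n) Prop) : minf A B ≤ B :=
  fun _ _ h => h.2

def Set.ofPropHom (𝒜 : Type*) : Prop →+* Set 𝒜 where
  toFun p := {_a | p}
  map_one' := rfl
  map_mul' _ _ := rfl
  map_zero' := rfl
  map_add' _ _ := rfl

section emb

variable {𝒜 l m n : Type*}

theorem emb_mul [Fintype m] (M : Matrix l m Prop) (N : Matrix m n Prop) :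
    emb 𝒜 (M * N) = emb 𝒜 M * emb 𝒜 N :=
  Matrix.map_mul (f := Set.ofPropHom 𝒜)

theorem emb_one [DecidableEq n] : emb 𝒜 (1 : Matrix n n Prop) = 1 :=
  Matrix.map_one (Set.ofPropHom 𝒜) rfl rfl

theorem emb_mono {M N : Matrix m n Prop} (h : M ≤ N) : emb 𝒜 M ≤ emb 𝒜 N :=
  fun i j _ ha => h i j ha

end emb

section Conditions

variable {α m n p : Type*} [IdemSemiring α] [Fintype m] [DecidableEq m] [Fintype n] [DecidableEq n]

theorem silent_condition_iff {V : Matrix n m α} {W : Matrix m n α} {P : Matrix n n α}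
    (hVW : 1 ≤ V * W) (hWV : W * V ≤ 1) (hP : V * W * P = V * W) (S : Matrix n n α) :
    V * W * (1 + P * S) * V = (1 + P * S) * V ↔ V * W * S ≤ V * W + P * S * (V * W) := by
  rw [Matrix.mul_mul_mul_eq_mul_iff hVW hWV, Matrix.mul_add, Matrix.mul_one, ← Matrix.mul_assoc,
    hP, Matrix.add_mul, Matrix.one_mul, Matrix.add_le_iff]
  exact and_iff_right fun _ _ => le_self_add

theorem action_condition_iff {V : Matrix n m α} {W : Matrix m n α} {P : Matrix n n α}
    (hVW : 1 ≤ V * W) (hWV : W * V ≤ 1) (hP : V * W * P = V * W) (A : Matrix n n α) :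
    V * W * P * A * V = P * A * V ↔ V * W * A ≤ P * A * (V * W) := by
  rw [Matrix.mul_assoc (V * W) P A, Matrix.mul_mul_mul_eq_mul_iff hVW hWV, ← Matrix.mul_assoc, hP]

theorem termination_condition_iff {R P : Matrix n n α} (hR : 1 ≤ R) (hP : R * P = R)
    (ρ : Matrix n p α) : R * P * ρ = P * ρ ↔ R * ρ ≤ P * ρ := by
  have hPR : P ≤ R := hP ▸ Matrix.le_mul_of_one_le_left hR P
  rw [hP]
  exact ⟨le_of_eq, fun h => le_antisymm h (Matrix.mul_le_mul_of_le hPR le_rfl)⟩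

end Conditions

theorem branching_bisim_iff_simulation_general {n N : ℕ} {𝒜 : Type*}
    (A : Matrix (Fin n) (Fin n) (Set 𝒜))
    (S : Matrix (Fin n) (Fin n) Prop) (ρ : Matrix (Fin n) (Fin 1) Prop)
    (V : Matrix (Fin n) (Fin N) Prop)
    (hcol : ∀ i, ∃! j, V i j)
    (R : Matrix (Fin n) (Fin n) Prop) (hR : R = V * Vᵀ)
    (PiV : Matrix (Fin n) (Fin n) Prop) (hPiV : PiV = mstar (minf S R)) :
    (V * Vᵀ * (1 + PiV * S) * V = (1 + PiV * S) * V ∧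
      emb 𝒜 V * emb 𝒜 Vᵀ * emb 𝒜 PiV * A * emb 𝒜 V = emb 𝒜 PiV * A * emb 𝒜 V ∧
      V * Vᵀ * PiV * ρ = PiV * ρ) ↔
    ((∀ i j, (R * S) i j ≤ (R + PiV * S * R) i j) ∧
      (∀ i j, (emb 𝒜 R * A) i j ≤ (emb 𝒜 PiV * A * emb 𝒜 R) i j) ∧
      (∀ i j, (R * ρ) i j ≤ (PiV * ρ) i j)) := by
  let := Prop.idemCommSemiring
  let := Set.idemCommSemiring (α := 𝒜)
  subst hR hPiV
  have hVV : 1 ≤ V * Vᵀ := Matrix.one_le_mul_transpose fun i => (hcol i).exists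
  have hVtV : Vᵀ * V ≤ 1 := Matrix.transpose_mul_le_one fun i _ ha _ hb => (hcol i).unique ha hb
  have hRR : V * Vᵀ * (V * Vᵀ) ≤ V * Vᵀ := Matrix.mul_mul_mul_le_of_mul_le_one hVtV
  have hRP : V * Vᵀ * mstar (minf S (V * Vᵀ)) = V * Vᵀ :=
    Matrix.mul_eq_left_of_one_le_of_le (one_le_mstar _) (mstar_le hVV hRR (minf_le_right _ _)) hRR
  have hEVV : 1 ≤ emb 𝒜 V * emb 𝒜 Vᵀ := by
    rw [← emb_mul, ← emb_one]
    exact emb_mono hVV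
  have hEVtV : emb 𝒜 Vᵀ * emb 𝒜 V ≤ 1 := by
    rw [← emb_mul, ← emb_one]
    exact emb_mono hVtV
  have hERP : emb 𝒜 V * emb 𝒜 Vᵀ * emb 𝒜 (mstar (minf S (V * Vᵀ))) = emb 𝒜 V * emb 𝒜 Vᵀ := by
    rw [← emb_mul, ← emb_mul, hRP]
  rw [emb_mul]
  exact and_congr (silent_condition_iff hVV hVtV hRP S)
    (and_congr (action_condition_iff hEVV hEVtV hERP A) (termination_condition_iff hVV hRP ρ))

/-- the branching-bisimulation matrix conditions are equivalent to the
simulation-style conditions `RS ≤ R + Pi_V S R`, `RA ≤ Pi_V A R`, `Rρ ≤ Pi_V ρ`. -/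
theorem branching_bisim_iff_simulation {n N : ℕ} {𝒜 : Type*} (τ : 𝒜)
    (A : Matrix (Fin n) (Fin n) (Set 𝒜)) (hA : ∀ i j, τ ∉ A i j)
    (S : Matrix (Fin n) (Fin n) Prop) (ρ : Matrix (Fin n) (Fin 1) Prop)
    (V : Matrix (Fin n) (Fin N) Prop)
    (hcol : ∀ i, ∃! j, V i j) (hsurj : ∀ j, ∃ i, V i j)
    (R : Matrix (Fin n) (Fin n) Prop) (hR : R = V * Vᵀ)
    (PiV : Matrix (Fin n) (Fin n) Prop) (hPiV : PiV = mstar (minf S R)) :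
    (V * Vᵀ * (1 + PiV * S) * V = (1 + PiV * S) * V ∧
      emb 𝒜 V * emb 𝒜 Vᵀ * emb 𝒜 PiV * A * emb 𝒜 V = emb 𝒜 PiV * A * emb 𝒜 V ∧
      V * Vᵀ * PiV * ρ = PiV * ρ) ↔
    ((∀ i j, (R * S) i j ≤ (R + PiV * S * R) i j) ∧
      (∀ i j, (emb 𝒜 R * A) i j ≤ (emb 𝒜 PiV * A * emb 𝒜 R) i j) ∧
      (∀ i j, (R * ρ) i j ≤ (PiV * ρ) i j)) :=
  branching_bisim_iff_simulation_general A S ρ V hcol R hR PiV hPiV
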